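/- Let δ be an expansion function on L and φ : L → L a function with φ(a) ≤ a for all a ∈ L such that x ≤ y implies φ(x) ≤ φ(y) for all x, y ∈ L. Let {p_i : i ∈ Δ} be a nonempty family of φ-δ-primary elements of L that is totally ordered (a chain). Then p = ⋁_{i ∈ Δ} p_i is also φ-δ-primary. -/

import Mathlib

open CompleteLattice

variable {L : Type*} [CompleteLattice L] [CommMonoid L]

/-- The compact elements of a complete lattice, with the definition Mathlib used in December 2024. -/
def CompleteLattice.IsCompactElement {α : Type*} [CompleteLattice α] (k : α) : Prop :=
  ∀ s : Set α, k ≤ sSup s → ∃ t : Finset α, ↑t ⊆ s ∧ k ≤ t.sup id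

/-- `L` is a compactly generated multiplicative lattice: multiplication distributes over
arbitrary joins, the top element is the multiplicative identity, `1` is a compact element,
every element is a join of compact elements, and products of compact elements are compact. -/
def IsCGMultLattice (L : Type*) [CompleteLattice L] [CommMonoid L] : Prop :=
  (∀ (a : L) (S : Set L), a * sSup S = ⨆ b ∈ S, a * b) ∧
  ((1 : L) = ⊤) ∧
  CompleteLattice.IsCompactElement (1 : L) ∧
  (∀ a : L, a = sSup {x : L | CompleteLattice.IsCompactElement x ∧ x ≤ a}) ∧
  (∀ x y : L, CompleteLattice.IsCompactElement x → CompleteLattice.IsCompactElement y →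
    CompleteLattice.IsCompactElement (x * y))

/-- An expansion function on `L`: `a ≤ δ a` and `δ` is monotone. -/
def IsExpansion (δ : L → L) : Prop :=
  (∀ a : L, a ≤ δ a) ∧ ∀ a b : L, a ≤ b → δ a ≤ δ b

/-- A proper element `p` is `φ`-`δ`-primary if `a*b ≤ p` and `a*b ≰ φ p` imply
`a ≤ p` or `b ≤ δ p`. -/
def IsPhiDeltaPrimary (φ δ : L → L) (p : L) : Prop :=
  p < 1 ∧ ∀ a b : L, a * b ≤ p → ¬ a * b ≤ φ p → a ≤ p ∨ b ≤ δ p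

/-- A proper element `p` is `δ`-primary if `a*b ≤ p` implies `a ≤ p` or `b ≤ δ p`. -/
def IsDeltaPrimary (δ : L → L) (p : L) : Prop :=
  p < 1 ∧ ∀ a b : L, a * b ≤ p → a ≤ p ∨ b ≤ δ p

/-- A proper element `p` is `φ`-prime if `a*b ≤ p` and `a*b ≰ φ p` imply
`a ≤ p` or `b ≤ p`. -/
def IsPhiPrime (φ : L → L) (p : L) : Prop :=
  p < 1 ∧ ∀ a b : L, a * b ≤ p → ¬ a * b ≤ φ p → a ≤ p ∨ b ≤ p

/-- The residual `(a : b)`, the join of all `x` with `x * b ≤ a`. -/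
def lres (a b : L) : L := sSup {x : L | x * b ≤ a}

/-- The radical `√a`, the join of all compact `x` with `x ^ n ≤ a` for some `n ≥ 1`. -/
def lradical (a : L) : L :=
  sSup {x : L | CompleteLattice.IsCompactElement x ∧ ∃ n : ℕ, 0 < n ∧ x ^ n ≤ a}

/-- A principal element of a multiplicative lattice. -/
def IsPrincipalElem (e : L) : Prop :=
  ∀ a b : L, a ⊓ b * e = (lres a e ⊓ b) * e ∧ lres (a * e ⊔ b) e = lres b e ⊔ a

/-- A Noether lattice: modular, principally generated, satisfying the ascending
chain condition. -/
def IsNoetherLattice (L : Type*) [CompleteLattice L] [CommMonoid L] : Prop :=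
  IsModularLattice L ∧ (∀ a : L, a = sSup {e : L | IsPrincipalElem e ∧ e ≤ a}) ∧
  WellFoundedGT L

/-- A maximal element: proper, and `m < x ≤ 1` implies `x = 1`. -/
def IsMaximalElem (m : L) : Prop :=
  m < 1 ∧ ∀ x : L, m < x → x ≤ 1 → x = 1

/-!
Because the `p i` form a chain, a compact element below `p = ⨆ i, p i` already lies below a single
`p i`; in particular `p < 1`, as `1` is compact. Suppose `a * b ≤ p`, `a * b ≰ φ p` and `a ≰ p`.
Pick compact `x₀ ≤ a`, `y₀ ≤ b` with `x₀ * y₀ ≰ φ p`, and compact `x₁ ≤ a` with `x₁ ≰ p`. For a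
compact `y ≤ b`, the compact element `(x₀ ⊔ x₁) * (y ⊔ y₀)` lies below some `p i`, but not below
`φ (p i) ≤ φ p`. Since `x₀ ⊔ x₁ ≰ p i`, primality of `p i` gives `y ≤ δ (p i) ≤ δ p`, and `b`
is the join of such `y`.
-/

section Compact

variable {α : Type*} [CompleteLattice α]

theorem CompleteLattice.IsCompactElement.isCompactElement {k : α}
    (hk : CompleteLattice.IsCompactElement k) : _root_.IsCompactElement k :=
  (isCompactElement_iff_exists_le_sSup_of_le_sSup _ k).2 hk

theorem CompleteLattice.IsCompactElement.sup {x y : α} (hx : CompleteLattice.IsCompactElement x)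
    (hy : CompleteLattice.IsCompactElement y) : CompleteLattice.IsCompactElement (x ⊔ y) := by
  classical
  have h := isCompactElement_finsetSup (f := id) {x, y}
    (by simp [hx.isCompactElement, hy.isCompactElement])
  rwa [Finset.sup_insert, Finset.sup_singleton, id, id,
    isCompactElement_iff_exists_le_sSup_of_le_sSup] at h

theorem CompleteLattice.IsCompactElement.exists_le_of_le_iSup {ι : Type*} [Nonempty ι] {k : α}
    (hk : CompleteLattice.IsCompactElement k) {p : ι → α} (hp : Directed (· ≤ ·) p)
    (h : k ≤ ⨆ i, p i) : ∃ i, k ≤ p i := by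
  obtain ⟨-, ⟨i, rfl⟩, hi⟩ := (isCompactElement_iff_le_of_directed_sSup_le _ k).1
    hk.isCompactElement (Set.range p) (Set.range_nonempty p) (directedOn_range.2 hp)
    (by rwa [sSup_range])
  exact ⟨i, hi⟩

theorem exists_compact_le_not_le
    (hcg : ∀ a : α, a = sSup {x : α | CompleteLattice.IsCompactElement x ∧ x ≤ a})
    {a c : α} (h : ¬ a ≤ c) : ∃ x, CompleteLattice.IsCompactElement x ∧ x ≤ a ∧ ¬ x ≤ c := by
  by_contra! hx
  exact h ((hcg a).trans_le (sSup_le fun x ⟨hxc, hxa⟩ => hx x hxc hxa))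

end Compact

theorem mul_le_mul_left_of_sSup_distrib
    (hdist : ∀ (a : L) (S : Set L), a * sSup S = ⨆ b ∈ S, a * b) {b c : L} (a : L)
    (hbc : b ≤ c) : a * b ≤ a * c :=
  calc a * b ≤ ⨆ x ∈ ({b, c} : Set L), a * x := le_biSup _ (by simp)
    _ = a * c := by rw [← hdist, sSup_pair, sup_eq_right.2 hbc]

theorem mul_le_mul_of_sSup_distrib (hdist : ∀ (a : L) (S : Set L), a * sSup S = ⨆ b ∈ S, a * b)
    {a b c d : L} (hab : a ≤ b) (hcd : c ≤ d) : a * c ≤ b * d :=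
  calc a * c ≤ a * d := mul_le_mul_left_of_sSup_distrib hdist a hcd
    _ = d * a := mul_comm a d
    _ ≤ d * b := mul_le_mul_left_of_sSup_distrib hdist d hab
    _ = b * d := mul_comm d b

theorem exists_compact_mul_not_le (hdist : ∀ (a : L) (S : Set L), a * sSup S = ⨆ b ∈ S, a * b)
    (hcg : ∀ a : L, a = sSup {x : L | CompleteLattice.IsCompactElement x ∧ x ≤ a})
    {a b c : L} (h : ¬ a * b ≤ c) :
    ∃ x y, CompleteLattice.IsCompactElement x ∧ CompleteLattice.IsCompactElement y ∧
      x ≤ a ∧ y ≤ b ∧ ¬ x * y ≤ c := by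
  by_contra! hxy
  apply h
  rw [hcg a, hcg b, hdist]
  refine iSup₂_le fun y ⟨hyc, hyb⟩ => ?_
  rw [mul_comm, hdist]
  exact iSup₂_le fun x ⟨hxc, hxa⟩ => mul_comm x y ▸ hxy x y hxc hyc hxa hyb

theorem IsCGMultLattice.isPhiDeltaPrimary_of_forall_compact_le (hL : IsCGMultLattice L)
    {φ δ : L → L} (hδ : Monotone δ) (hφ : Monotone φ) {P : L} (hP : P < 1)
    (hloc : ∀ z, CompleteLattice.IsCompactElement z → z ≤ P →
      ∃ q ≤ P, IsPhiDeltaPrimary φ δ q ∧ z ≤ q) :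
    IsPhiDeltaPrimary φ δ P := by
  obtain ⟨hdist, -, -, hcg, hmul⟩ := hL
  refine ⟨hP, fun a b habP habφ => or_iff_not_imp_left.2 fun haP => ?_⟩
  obtain ⟨x₀, y₀, hx₀, hy₀, hx₀a, hy₀b, hxy₀⟩ := exists_compact_mul_not_le hdist hcg habφ
  obtain ⟨x₁, hx₁, hx₁a, hx₁P⟩ := exists_compact_le_not_le hcg haP
  rw [hcg b]
  refine sSup_le fun y ⟨hy, hyb⟩ => ?_
  have hle : (x₀ ⊔ x₁) * (y ⊔ y₀) ≤ P :=
    (mul_le_mul_of_sSup_distrib hdist (sup_le hx₀a hx₁a) (sup_le hyb hy₀b)).trans habP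
  obtain ⟨q, hqP, hq, hzq⟩ := hloc _ (hmul _ _ (hx₀.sup hx₁) (hy.sup hy₀)) hle
  have hnφ : ¬ (x₀ ⊔ x₁) * (y ⊔ y₀) ≤ φ q := fun h => hxy₀
    ((mul_le_mul_of_sSup_distrib hdist le_sup_left le_sup_right).trans (h.trans (hφ hqP)))
  rcases hq.2 _ _ hzq hnφ with hxq | hyq
  · exact absurd (le_sup_right.trans (hxq.trans hqP)) hx₁P
  · exact le_sup_left.trans (hyq.trans (hδ hqP))

theorem chain_sup_phiDeltaPrimary_general {ι : Type*} [Nonempty ι]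
    (hL : IsCGMultLattice L) (δ φ : L → L) (hδ : IsExpansion δ)
    (hφmono : ∀ x y : L, x ≤ y → φ x ≤ φ y)
    (p : ι → L) (hp : ∀ i : ι, IsPhiDeltaPrimary φ δ (p i))
    (hchain : ∀ i j : ι, p i ≤ p j ∨ p j ≤ p i) :
    IsPhiDeltaPrimary φ δ (⨆ i : ι, p i) := by
  have hdir : Directed (· ≤ ·) p := fun i j =>
    (hchain i j).elim (fun h => ⟨j, h, le_rfl⟩) (fun h => ⟨i, le_rfl, h⟩)
  have hone : CompleteLattice.IsCompactElement (1 : L) := hL.2.2.1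
  have hlt : (⨆ i, p i) < 1 := (iSup_le fun i => (hp i).1.le).lt_of_not_ge fun h =>
    let ⟨i, hi⟩ := hone.exists_le_of_le_iSup hdir h
    (hp i).1.not_ge hi
  refine hL.isPhiDeltaPrimary_of_forall_compact_le (fun _ _ => hδ.2 _ _)
    (fun _ _ => hφmono _ _) hlt fun z hz hzp => ?_
  obtain ⟨i, hi⟩ := hz.exists_le_of_le_iSup hdir hzp
  exact ⟨p i, le_iSup p i, hp i, hi⟩

theorem chain_sup_phiDeltaPrimary {ι : Type*} [Nonempty ι]
    (hL : IsCGMultLattice L) (δ φ : L → L) (hδ : IsExpansion δ)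
    (hφ : ∀ a : L, φ a ≤ a) (hφmono : ∀ x y : L, x ≤ y → φ x ≤ φ y)
    (p : ι → L) (hp : ∀ i : ι, IsPhiDeltaPrimary φ δ (p i))
    (hchain : ∀ i j : ι, p i ≤ p j ∨ p j ≤ p i) :
    IsPhiDeltaPrimary φ δ (⨆ i : ι, p i) :=
  chain_sup_phiDeltaPrimary_general hL δ φ hδ hφmono p hp hchain
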